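/- arXiv:1709.03973 — 8 statements merged into one kernel-verified Lean document; each statement's English description precedes it below -/
import Mathlib

section
/- Let (S,L) be a Lie-Rinehart algebra over R, M a right module over the enveloping algebra U, and N a compatible left S⋊L-module. Then M ⊗_S N, equipped with the left L-action α·(m ⊗ n) = −(m·α) ⊗ n + m ⊗ (α·n) and the S-action s·(m ⊗ n) = (m·s) ⊗ n, is a left U-module; that is, (sα)·(m ⊗ n) = s·(α·(m ⊗ n)) for all s ∈ S, α ∈ L. -/
open TensorProduct

theorem stmt1_general {R S L M N : Type*} [CommRing R] [CommRing S] [Algebra R S]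
    [LieRing L] [Module S L]
    [AddCommGroup M] [Module S M] [AddCommGroup N] [Module S N]
    (D : L → Derivation R S S)
    (σ : L → M → M)
    (hM1 : ∀ (α : L) (s : S) (m : M), s • σ α m = (D α s) • m + σ α (s • m))
    (hM2 : ∀ (s : S) (α : L) (m : M), σ (s • α) m = σ α (s • m))
    (ρ : L → N → N)
    (hN2 : ∀ (s : S) (α : L) (n : N), ρ (s • α) n = s • ρ α n - (D α s) • n) :
    ∀ (s : S) (α : L) (m : M) (n : N),
      (-(σ (s • α) m)) ⊗ₜ[S] n + m ⊗ₜ[S] (ρ (s • α) n)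
        = s • ((-(σ α m)) ⊗ₜ[S] n + m ⊗ₜ[S] (ρ α n)) := by
  intro s α m n
  have hσ : σ α (s • m) = s • σ α m - D α s • m := by rw [hM1]; abel
  rw [hM2, hN2, hσ]
  -- `smul_tmul` moves every scalar to the right factor, where the two `∂_α(s)` terms cancel.
  simp only [neg_sub, sub_tmul, tmul_sub, neg_tmul, smul_add, smul_neg, smul_tmul', smul_tmul]
  abel

/-- For a Lie-Rinehart algebra `(S,L)` over `R`, a right `U`-module `M`
(with right `L`-action `σ`) and a compatible left `S⋊L`-module `N` (with `L`-action `ρ`),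
the tensor product `M ⊗_S N` with left `L`-action `α·(m⊗n) = −(m·α)⊗n + m⊗(α·n)` is a
left `U`-module: `(sα)·(m⊗n) = s·(α·(m⊗n))`. -/
theorem stmt1 {R S L M N : Type*} [CommRing R] [CommRing S] [Algebra R S]
    [LieRing L] [LieAlgebra R L] [Module S L]
    [AddCommGroup M] [Module S M] [AddCommGroup N] [Module S N]
    (D : L → Derivation R S S)
    (hDsmul : ∀ (s : S) (α : L), D (s • α) = s • D α)
    (σ : L → M → M)
    (hM1 : ∀ (α : L) (s : S) (m : M), s • σ α m = (D α s) • m + σ α (s • m))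
    (hM2 : ∀ (s : S) (α : L) (m : M), σ (s • α) m = σ α (s • m))
    (ρ : L → N → N)
    (hN1 : ∀ (α : L) (s : S) (n : N), ρ α (s • n) = (D α s) • n + s • ρ α n)
    (hN2 : ∀ (s : S) (α : L) (n : N), ρ (s • α) n = s • ρ α n - (D α s) • n) :
    ∀ (s : S) (α : L) (m : M) (n : N),
      (-(σ (s • α) m)) ⊗ₜ[S] n + m ⊗ₜ[S] (ρ (s • α) n)
        = s • ((-(σ α m)) ⊗ₜ[S] n + m ⊗ₜ[S] (ρ α n)) :=
  stmt1_general D σ hM1 hM2 ρ hN2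
end

section
/- Let (S,L) be a Lie-Rinehart algebra over R, M a right U-module and N a compatible left S⋊L-module. The canonical map θ : M ⊗_S N → Hom_S(N^∨, M), sending m ⊗ n to the map φ ↦ m·φ(n), is a morphism of left U-modules: θ(α·(m ⊗ n)) = α·θ(m ⊗ n) for all α ∈ L, where L acts on Hom_S(N^∨,M) by (α·f)(φ) = −f(φ)·α + f(φ·α). -/
theorem eq_smul_sub_of_smul_eq_add {S M : Type*} [Semiring S] [AddCommGroup M] [Module S M]
    {f : M → M} {s d : S} {m : M} (h : s • f m = d • m + f (s • m)) :
    f (s • m) = s • f m - d • m := by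
  rw [h]; abel

theorem stmt2_general {R S L M N : Type*} [CommRing R] [CommRing S] [Algebra R S]
    [AddCommGroup M] [Module S M] [AddCommGroup N] [Module S N]
    (D : L → Derivation R S S)
    (σ : L → M → M)
    (hM1 : ∀ (α : L) (s : S) (m : M), s • σ α m = (D α s) • m + σ α (s • m))
    (ρ : L → N → N) :
    ∀ (α : L) (m : M) (n : N) (φ : N →ₗ[S] S),
      (φ n) • (-(σ α m)) + (φ (ρ α n)) • m
        = -(σ α ((φ n) • m)) + (-(D α (φ n)) + φ (ρ α n)) • m := by
  intro α m n φ
  rw [eq_smul_sub_of_smul_eq_add (hM1 α (φ n) m)]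
  module

/-- For a Lie-Rinehart algebra `(S,L)` over `R`, a right `U`-module `M`
(action `σ`) and a compatible left `S⋊L`-module `N` (action `ρ`), the canonical map
`θ : M ⊗_S N → Hom_S(N^∨,M)`, `m ⊗ n ↦ (φ ↦ m·φ(n))` is a morphism of left `U`-modules:
`θ(α·(m⊗n)) = α·θ(m⊗n)`, stated pointwise at each `φ ∈ N^∨ = Hom_S(N,S)`, where the left
`U`-action on `Hom_S(N^∨,M)` is `(α·f)(φ) = −f(φ)·α + f(φ·α)` with
`(φ·α)(n) = −∂_α(φ(n)) + φ(α·n)`. -/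
theorem stmt2 {R S L M N : Type*} [CommRing R] [CommRing S] [Algebra R S]
    [LieRing L] [LieAlgebra R L] [Module S L]
    [AddCommGroup M] [Module S M] [AddCommGroup N] [Module S N]
    (D : L → Derivation R S S)
    (hDsmul : ∀ (s : S) (α : L), D (s • α) = s • D α)
    (σ : L → M → M)
    (hM1 : ∀ (α : L) (s : S) (m : M), s • σ α m = (D α s) • m + σ α (s • m))
    (hM2 : ∀ (s : S) (α : L) (m : M), σ (s • α) m = σ α (s • m))
    (ρ : L → N → N)
    (hN1 : ∀ (α : L) (s : S) (n : N), ρ α (s • n) = (D α s) • n + s • ρ α n)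
    (hN2 : ∀ (s : S) (α : L) (n : N), ρ (s • α) n = s • ρ α n - (D α s) • n) :
    ∀ (α : L) (m : M) (n : N) (φ : N →ₗ[S] S),
      (φ n) • (-(σ α m)) + (φ (ρ α n)) • m
        = -(σ α ((φ n) • m)) + (-(D α (φ n)) + φ (ρ α n)) • m :=
  stmt2_general D σ hM1 ρ
end

section
/- Let (S,L) be a Lie-Rinehart algebra over R and suppose λ_L, λ_S : L → S both satisfy λ(sα) = sλ(α) − ∂_α(s) and λ([α,β]) = ∂_α(λ(β)) − ∂_β(λ(α)). Setting ν_α := α + λ_L(α) − λ_S(α) ∈ S ⊕ L ⊂ U, the following relations hold in the enveloping algebra U: [ν_α, ν_β] = ν_{[α,β]}, ν_{sα} = s ν_α, and [ν_α, s] = ∂_α(s), for all s ∈ S and α, β ∈ L. -/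
/-! The difference `δ := λ_L − λ_S` is `S`-linear and satisfies
`δ⁅α, β⁆ = ∂_α(δ β) − ∂_β(δ α)`, because the inhomogeneous terms `−∂_α(s)` cancel. For any such
`δ` the twisted elements `ν_α = α + δ α` satisfy the three relations: the image of `S` in `U` is
commutative, so in `⁅α + δ α, β + δ β⁆` the only new terms are
`⁅α, δ β⁆ − ⁅β, δ α⁆ = ∂_α(δ β) − ∂_β(δ α)`. -/

section RingCommutator

variable {S U F : Type*} [CommRing S] [Ring U] [FunLike F S U] [RingHomClass F S U] (ιS : F)

theorem add_map_mul_map_sub_map_mul_add_map (x : U) (a s : S) :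
    (x + ιS a) * ιS s - ιS s * (x + ιS a) = x * ιS s - ιS s * x := by
  rw [add_mul, mul_add, ← map_mul, ← map_mul, mul_comm a s]
  abel

theorem add_map_mul_add_map_sub (x y : U) (a b : S) :
    (x + ιS a) * (y + ιS b) - (y + ιS b) * (x + ιS a)
      = (x * y - y * x) + (x * ιS b - ιS b * x) - (y * ιS a - ιS a * y) := by
  simp only [add_mul, mul_add, ← map_mul, mul_comm b a]
  abel

end RingCommutator

section Twist

variable {S L U F G : Type*} [CommRing S] [Ring U] [FunLike F S U] [RingHomClass F S U]
  [FunLike G S S] {d : L → G} {ιS : F} {ιL : L → U} {δ : L → S}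

theorem sub_apply_smul_eq_mul_sub [SMul S L] {lam₁ lam₂ : L → S}
    (h₁ : ∀ (s : S) (α : L), lam₁ (s • α) = s * lam₁ α - d α s)
    (h₂ : ∀ (s : S) (α : L), lam₂ (s • α) = s * lam₂ α - d α s) (s : S) (α : L) :
    lam₁ (s • α) - lam₂ (s • α) = s * (lam₁ α - lam₂ α) := by
  rw [h₁, h₂]
  ring

theorem sub_apply_lie_eq_sub [LieRing L] [AddMonoidHomClass G S S] {lam₁ lam₂ : L → S}
    (h₁ : ∀ α β : L, lam₁ ⁅α, β⁆ = d α (lam₁ β) - d β (lam₁ α))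
    (h₂ : ∀ α β : L, lam₂ ⁅α, β⁆ = d α (lam₂ β) - d β (lam₂ α)) (α β : L) :
    lam₁ ⁅α, β⁆ - lam₂ ⁅α, β⁆ = d α (lam₁ β - lam₂ β) - d β (lam₁ α - lam₂ α) := by
  rw [h₁, h₂, map_sub, map_sub]
  ring

theorem twist_mul_twist_sub [LieRing L]
    (hrel1 : ∀ α β : L, ιL ⁅α, β⁆ = ιL α * ιL β - ιL β * ιL α)
    (hrel3 : ∀ (α : L) (s : S), ιL α * ιS s - ιS s * ιL α = ιS (d α s))
    (hδ : ∀ α β : L, δ ⁅α, β⁆ = d α (δ β) - d β (δ α)) (α β : L) :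
    (ιL α + ιS (δ α)) * (ιL β + ιS (δ β)) - (ιL β + ιS (δ β)) * (ιL α + ιS (δ α))
      = ιL ⁅α, β⁆ + ιS (δ ⁅α, β⁆) := by
  rw [add_map_mul_add_map_sub, hrel3, hrel3, ← hrel1, hδ, map_sub, add_sub_assoc]

theorem twist_smul [SMul S L] (hrel2 : ∀ (s : S) (α : L), ιL (s • α) = ιS s * ιL α)
    (hδ : ∀ (s : S) (α : L), δ (s • α) = s * δ α) (s : S) (α : L) :
    ιL (s • α) + ιS (δ (s • α)) = ιS s * (ιL α + ιS (δ α)) := by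
  rw [hrel2, hδ, map_mul, mul_add]

theorem twist_mul_map_sub (hrel3 : ∀ (α : L) (s : S), ιL α * ιS s - ιS s * ιL α = ιS (d α s))
    (α : L) (s : S) :
    (ιL α + ιS (δ α)) * ιS s - ιS s * (ιL α + ιS (δ α)) = ιS (d α s) := by
  rw [add_map_mul_map_sub_map_mul_add_map, hrel3]

end Twist

theorem stmt5_general {R S L U : Type*} [CommRing R] [CommRing S] [Algebra R S]
    [LieRing L] [LieAlgebra R L] [Module S L] [Ring U] [Algebra R U]
    (D : L → Derivation R S S)
    (ιS : S →ₐ[R] U) (ιL : L →ₗ[R] U)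
    (hrel1 : ∀ α β : L, ιL ⁅α, β⁆ = ιL α * ιL β - ιL β * ιL α)
    (hrel2 : ∀ (s : S) (α : L), ιL (s • α) = ιS s * ιL α)
    (hrel3 : ∀ (α : L) (s : S), ιL α * ιS s - ιS s * ιL α = ιS (D α s))
    (lamL lamS : L → S)
    (hL1 : ∀ (s : S) (α : L), lamL (s • α) = s * lamL α - D α s)
    (hL2 : ∀ α β : L, lamL ⁅α, β⁆ = D α (lamL β) - D β (lamL α))
    (hS1 : ∀ (s : S) (α : L), lamS (s • α) = s * lamS α - D α s)
    (hS2 : ∀ α β : L, lamS ⁅α, β⁆ = D α (lamS β) - D β (lamS α)) :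
    ∀ (s : S) (α β : L),
      ((ιL α + ιS (lamL α) - ιS (lamS α)) * (ιL β + ιS (lamL β) - ιS (lamS β))
          - (ιL β + ιS (lamL β) - ιS (lamS β)) * (ιL α + ιS (lamL α) - ιS (lamS α))
        = ιL ⁅α, β⁆ + ιS (lamL ⁅α, β⁆) - ιS (lamS ⁅α, β⁆)) ∧
      (ιL (s • α) + ιS (lamL (s • α)) - ιS (lamS (s • α))
        = ιS s * (ιL α + ιS (lamL α) - ιS (lamS α))) ∧
      ((ιL α + ιS (lamL α) - ιS (lamS α)) * ιS s
          - ιS s * (ιL α + ιS (lamL α) - ιS (lamS α))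
        = ιS (D α s)) := by
  intro s α β
  let δ : L → S := fun γ => lamL γ - lamS γ
  have hν : ∀ γ : L, ιL γ + ιS (lamL γ) - ιS (lamS γ) = ιL γ + ιS (δ γ) := fun γ => by
    rw [map_sub, add_sub_assoc]
  simp only [hν]
  exact ⟨twist_mul_twist_sub hrel1 hrel3 (sub_apply_lie_eq_sub hL2 hS2) α β,
    twist_smul hrel2 (sub_apply_smul_eq_mul_sub hL1 hS1) s α, twist_mul_map_sub hrel3 α s⟩

/-- Let `(S,L)` be a Lie-Rinehart algebra over `R` with enveloping algebra `U`
(encoded via `ιS`, `ιL` and the defining relations), and let `λ_L, λ_S : L → S` both satisfy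
`λ(sα) = sλ(α) − ∂_α(s)` and `λ(⁅α,β⁆) = ∂_α(λ(β)) − ∂_β(λ(α))`.  Setting
`ν_α := α + λ_L(α) − λ_S(α) ∈ U`, the relations `[ν_α, ν_β] = ν_{[α,β]}`,
`ν_{sα} = s ν_α` and `[ν_α, s] = ∂_α(s)` hold in `U`. -/
theorem stmt5 {R S L U : Type*} [CommRing R] [CommRing S] [Algebra R S]
    [LieRing L] [LieAlgebra R L] [Module S L] [Ring U] [Algebra R U]
    (D : L → Derivation R S S)
    (hDsmul : ∀ (s : S) (α : L), D (s • α) = s • D α)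
    (hDlie : ∀ α β : L, D ⁅α, β⁆ = ⁅D α, D β⁆)
    (ιS : S →ₐ[R] U) (ιL : L →ₗ[R] U)
    (hrel1 : ∀ α β : L, ιL ⁅α, β⁆ = ιL α * ιL β - ιL β * ιL α)
    (hrel2 : ∀ (s : S) (α : L), ιL (s • α) = ιS s * ιL α)
    (hrel3 : ∀ (α : L) (s : S), ιL α * ιS s - ιS s * ιL α = ιS (D α s))
    (lamL lamS : L → S)
    (hL1 : ∀ (s : S) (α : L), lamL (s • α) = s * lamL α - D α s)
    (hL2 : ∀ α β : L, lamL ⁅α, β⁆ = D α (lamL β) - D β (lamL α))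
    (hS1 : ∀ (s : S) (α : L), lamS (s • α) = s * lamS α - D α s)
    (hS2 : ∀ α β : L, lamS ⁅α, β⁆ = D α (lamS β) - D β (lamS α)) :
    ∀ (s : S) (α β : L),
      ((ιL α + ιS (lamL α) - ιS (lamS α)) * (ιL β + ιS (lamL β) - ιS (lamS β))
          - (ιL β + ιS (lamL β) - ιS (lamS β)) * (ιL α + ιS (lamL α) - ιS (lamS α))
        = ιL ⁅α, β⁆ + ιS (lamL ⁅α, β⁆) - ιS (lamS ⁅α, β⁆)) ∧
      (ιL (s • α) + ιS (lamL (s • α)) - ιS (lamS (s • α))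
        = ιS s * (ιL α + ιS (lamL α) - ιS (lamS α))) ∧
      ((ιL α + ιS (lamL α) - ιS (lamS α)) * ιS s
          - ιS s * (ιL α + ιS (lamL α) - ιS (lamS α))
        = ιS (D α s)) :=
  stmt5_general D ιS ιL hrel1 hrel2 hrel3 lamL lamS hL1 hL2 hS1 hS2
end

section
/- Let R be a commutative ring, S = R[x,y,z], and P⃗ = (P_x,P_y,P_z) ∈ S³. The antisymmetric biderivation on S determined by {x,y} = P_z, {y,z} = P_x, {z,x} = P_y satisfies the Jacobi identity (and hence is a Poisson bracket) if P⃗ · curl(P⃗) = 0, where curl(P⃗) = (∂P_z/∂y − ∂P_y/∂z, ∂P_x/∂z − ∂P_z/∂x, ∂P_y/∂x − ∂P_x/∂y). In particular, if P⃗ = grad(Q) for some Q ∈ S (the Jacobian bracket), the Jacobi identity holds. -/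
/-!
Expanding the Jacobiator of the bracket with the Leibniz rule, all terms containing second
derivatives of `f`, `g`, `h` cancel once mixed partials are known to commute, and what is left is
`-(P⃗ · curl P⃗) · det(∇f, ∇g, ∇h)`. For `P⃗ = ∇Q` the curl vanishes by the same commutation.
-/

open MvPolynomial

/-- The antisymmetric biderivation on `R[x,y,z]` determined by
`{x,y} = Pz`, `{y,z} = Px`, `{z,x} = Py`. -/
noncomputable def nambuBr {R : Type*} [CommRing R]
    (Px Py Pz f g : MvPolynomial (Fin 3) R) : MvPolynomial (Fin 3) R :=
  Px * (pderiv 1 f * pderiv 2 g - pderiv 2 f * pderiv 1 g)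
    + Py * (pderiv 2 f * pderiv 0 g - pderiv 0 f * pderiv 2 g)
    + Pz * (pderiv 0 f * pderiv 1 g - pderiv 1 f * pderiv 0 g)

theorem pderiv_pderiv_comm {σ R : Type*} [CommSemiring R] (i j : σ) (f : MvPolynomial σ R) :
    pderiv i (pderiv j f) = pderiv j (pderiv i f) := by
  induction f using MvPolynomial.induction_on with
  | C a => simp
  | add p q hp hq => simp only [map_add, hp, hq]
  | mul_X p k hp =>
    have hX : ∀ a b : σ, pderiv a (pderiv b (X k : MvPolynomial σ R)) = 0 := by
      intro a b
      rcases eq_or_ne k b with rfl | h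
      · rw [pderiv_X_self, pderiv_one]
      · rw [pderiv_X_of_ne h, map_zero]
    simp only [pderiv_mul, map_add, hp, hX]
    ring

section Bracket

variable {R : Type*} [CommRing R]

noncomputable def dotCurl (Px Py Pz : MvPolynomial (Fin 3) R) : MvPolynomial (Fin 3) R :=
  Px * (pderiv 1 Pz - pderiv 2 Py) + Py * (pderiv 2 Px - pderiv 0 Pz)
    + Pz * (pderiv 0 Py - pderiv 1 Px)

noncomputable def jacobianDet (f g h : MvPolynomial (Fin 3) R) : MvPolynomial (Fin 3) R :=
  pderiv 0 f * (pderiv 1 g * pderiv 2 h - pderiv 2 g * pderiv 1 h)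
    - pderiv 1 f * (pderiv 0 g * pderiv 2 h - pderiv 2 g * pderiv 0 h)
    + pderiv 2 f * (pderiv 0 g * pderiv 1 h - pderiv 1 g * pderiv 0 h)

theorem nambuBr_jacobiator (Px Py Pz f g h : MvPolynomial (Fin 3) R) :
    nambuBr Px Py Pz f (nambuBr Px Py Pz g h)
      + nambuBr Px Py Pz g (nambuBr Px Py Pz h f)
      + nambuBr Px Py Pz h (nambuBr Px Py Pz f g) =
    -(dotCurl Px Py Pz * jacobianDet f g h) := by
  simp only [nambuBr, dotCurl, jacobianDet, pderiv_mul, map_add, map_sub]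
  simp only [pderiv_pderiv_comm (1 : Fin 3) 0, pderiv_pderiv_comm (2 : Fin 3) 0,
    pderiv_pderiv_comm (2 : Fin 3) 1]
  ring

theorem nambuBr_jacobi {Px Py Pz : MvPolynomial (Fin 3) R} (h : dotCurl Px Py Pz = 0)
    (f g k : MvPolynomial (Fin 3) R) :
    nambuBr Px Py Pz f (nambuBr Px Py Pz g k)
      + nambuBr Px Py Pz g (nambuBr Px Py Pz k f)
      + nambuBr Px Py Pz k (nambuBr Px Py Pz f g) = 0 := by
  rw [nambuBr_jacobiator, h, zero_mul, neg_zero]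

theorem dotCurl_grad (Q : MvPolynomial (Fin 3) R) :
    dotCurl (pderiv 0 Q) (pderiv 1 Q) (pderiv 2 Q) = 0 := by
  simp only [dotCurl, pderiv_pderiv_comm (2 : Fin 3) 1, pderiv_pderiv_comm (0 : Fin 3) 2,
    pderiv_pderiv_comm (1 : Fin 3) 0, sub_self, mul_zero, add_zero]

end Bracket

/-- If `P⃗ · curl(P⃗) = 0` then the bracket `{x,y} = Pz`, `{y,z} = Px`,
`{z,x} = Py` (extended as an antisymmetric biderivation) satisfies the Jacobi identity,
hence is a Poisson bracket; in particular for `P⃗ = grad Q` (the Jacobian bracket)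
the Jacobi identity holds. -/
theorem stmt8 {R : Type*} [CommRing R] (Px Py Pz : MvPolynomial (Fin 3) R)
    (hdot : Px * (pderiv 1 Pz - pderiv 2 Py) + Py * (pderiv 2 Px - pderiv 0 Pz)
        + Pz * (pderiv 0 Py - pderiv 1 Px) = 0) :
    (∀ f g h : MvPolynomial (Fin 3) R,
      nambuBr Px Py Pz f (nambuBr Px Py Pz g h)
        + nambuBr Px Py Pz g (nambuBr Px Py Pz h f)
        + nambuBr Px Py Pz h (nambuBr Px Py Pz f g) = 0) ∧
    (∀ Q f g h : MvPolynomial (Fin 3) R,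
      nambuBr (pderiv 0 Q) (pderiv 1 Q) (pderiv 2 Q) f
          (nambuBr (pderiv 0 Q) (pderiv 1 Q) (pderiv 2 Q) g h)
        + nambuBr (pderiv 0 Q) (pderiv 1 Q) (pderiv 2 Q) g
          (nambuBr (pderiv 0 Q) (pderiv 1 Q) (pderiv 2 Q) h f)
        + nambuBr (pderiv 0 Q) (pderiv 1 Q) (pderiv 2 Q) h
          (nambuBr (pderiv 0 Q) (pderiv 1 Q) (pderiv 2 Q) f g) = 0) :=
  ⟨nambuBr_jacobi hdot, fun Q => nambuBr_jacobi (dotCurl_grad Q)⟩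
end

section
/- Let (S,L) be a Lie-Rinehart algebra over R, U its enveloping algebra, and M a left module over U ⊗_R U^op (a U-bimodule). Define M^S = {m ∈ M : s·m = m·s for all s ∈ S}. Then for m ∈ M^S and α ∈ L, the element α·m − m·α again lies in M^S, and the resulting operations s ⋆ m = s·m (s ∈ S) and α ⋆ m = α·m − m·α (α ∈ L) make M^S a left U-module: α ⋆ (s ⋆ m) = ∂_α(s) ⋆ m + s ⋆ (α ⋆ m) and s ⋆ (α ⋆ m) = (sα) ⋆ m. -/
open MulOpposite

/-!
`α ⋆ m = α·m − m·α` is the inner derivation `[α, -]` of the bimodule, so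
`[x, a·m] = [x, a]·m + a·[x, m]`, which is the Leibniz rule once `[α, s] = ∂_α(s)`.
Moreover `[x, m]` commutes with `a` as soon as `m` commutes with both `a` and `[x, a]`;
for `a = s ∈ S` and `x = α` the second condition holds because `[α, s] = ∂_α(s)` lies in `S`.
-/

section Bimodule

variable {U M : Type*} [Ring U] [AddCommGroup M] [Module U M] [Module Uᵐᵒᵖ M]
  [SMulCommClass U Uᵐᵒᵖ M]

theorem smul_smul_sub_op_smul_smul (x a : U) (m : M) :
    x • a • m - op x • a • m = (x * a - a * x) • m + a • (x • m - op x • m) := by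
  rw [smul_sub, smul_comm a (op x), sub_smul, smul_smul, smul_smul]
  abel

theorem smul_sub_op_smul_of_smul_eq_op_smul {a : U} {m : M} (ha : a • m = op a • m) (x : U) :
    a • (x • m - op x • m) = (a * x) • m - op (a * x) • m := by
  rw [smul_sub, smul_smul, smul_comm, ha, smul_smul, ← op_mul]

theorem op_smul_sub_op_smul_of_smul_eq_op_smul {a : U} {m : M} (ha : a • m = op a • m)
    (x : U) : op a • (x • m - op x • m)
      = a • (x • m - op x • m) + ((x * a - a * x) • m - op (x * a - a * x) • m) := by
  rw [smul_sub_op_smul_of_smul_eq_op_smul ha, smul_sub, ← smul_comm x, ← ha, smul_smul,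
    smul_smul, ← op_mul, sub_smul, op_sub, sub_smul]
  abel

theorem smul_sub_op_smul_eq_op_smul_of_smul_eq_op_smul {a x : U} {m : M}
    (ha : a • m = op a • m) (hxa : (x * a - a * x) • m = op (x * a - a * x) • m) :
    a • (x • m - op x • m) = op a • (x • m - op x • m) := by
  rw [op_smul_sub_op_smul_of_smul_eq_op_smul ha, hxa, sub_self, add_zero]

end Bimodule

theorem stmt13_general {R S L U M : Type*} [CommRing R] [CommRing S] [Algebra R S]
    [LieRing L] [LieAlgebra R L] [Module S L] [Ring U] [Algebra R U]
    [AddCommGroup M] [Module U M] [Module Uᵐᵒᵖ M] [SMulCommClass U Uᵐᵒᵖ M]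
    (D : L → Derivation R S S)
    (ιS : S →ₐ[R] U) (ιL : L →ₗ[R] U)
    (hrel2 : ∀ (s : S) (α : L), ιL (s • α) = ιS s * ιL α)
    (hrel3 : ∀ (α : L) (s : S), ιL α * ιS s - ιS s * ιL α = ιS (D α s)) :
    ∀ m : M, (∀ s : S, ιS s • m = op (ιS s) • m) →
      ∀ α : L,
        (∀ s : S, ιS s • (ιL α • m - op (ιL α) • m)
            = op (ιS s) • (ιL α • m - op (ιL α) • m)) ∧
        (∀ s : S, ιL α • (ιS s • m) - op (ιL α) • (ιS s • m)
            = ιS (D α s) • m + ιS s • (ιL α • m - op (ιL α) • m)) ∧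
        (∀ s : S, ιS s • (ιL α • m - op (ιL α) • m)
            = ιL (s • α) • m - op (ιL (s • α)) • m) := by
  intro m hm α
  refine ⟨fun s => ?_, fun s => ?_, fun s => ?_⟩
  · exact smul_sub_op_smul_eq_op_smul_of_smul_eq_op_smul (hm s) (by rw [hrel3]; exact hm _)
  · rw [smul_smul_sub_op_smul_smul, hrel3]
  · rw [smul_sub_op_smul_of_smul_eq_op_smul (hm s), hrel2]

/-- Let `(S,L)` be a Lie-Rinehart algebra over `R` with enveloping algebra `U`
(encoded by `ιS`, `ιL` and the defining relations), and let `M` be a `U`-bimodule (a left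
`U`-module and a left `Uᵐᵒᵖ`-module with commuting actions).  Set
`M^S = {m : s·m = m·s for all s ∈ S}`.  Then for `m ∈ M^S` and `α ∈ L`, the element
`α·m − m·α` again lies in `M^S`, and the operations `s ⋆ m = s·m`,
`α ⋆ m = α·m − m·α` satisfy the left `U`-module laws
`α ⋆ (s ⋆ m) = ∂_α(s) ⋆ m + s ⋆ (α ⋆ m)` and `s ⋆ (α ⋆ m) = (sα) ⋆ m`. -/
theorem stmt13 {R S L U M : Type*} [CommRing R] [CommRing S] [Algebra R S]
    [LieRing L] [LieAlgebra R L] [Module S L] [Ring U] [Algebra R U]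
    [AddCommGroup M] [Module U M] [Module Uᵐᵒᵖ M] [SMulCommClass U Uᵐᵒᵖ M]
    (D : L → Derivation R S S)
    (ιS : S →ₐ[R] U) (ιL : L →ₗ[R] U)
    (hrel1 : ∀ α β : L, ιL ⁅α, β⁆ = ιL α * ιL β - ιL β * ιL α)
    (hrel2 : ∀ (s : S) (α : L), ιL (s • α) = ιS s * ιL α)
    (hrel3 : ∀ (α : L) (s : S), ιL α * ιS s - ιS s * ιL α = ιS (D α s)) :
    ∀ m : M, (∀ s : S, ιS s • m = op (ιS s) • m) →
      ∀ α : L,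
        (∀ s : S, ιS s • (ιL α • m - op (ιL α) • m)
            = op (ιS s) • (ιL α • m - op (ιL α) • m)) ∧
        (∀ s : S, ιL α • (ιS s • m) - op (ιL α) • (ιS s • m)
            = ιS (D α s) • m + ιS s • (ιL α • m - op (ιL α) • m)) ∧
        (∀ s : S, ιS s • (ιL α • m - op (ιL α) • m)
            = ιL (s • α) • m - op (ιL (s • α)) • m) :=
  stmt13_general D ιS ιL hrel2 hrel3
end

section
/- Let (S,L) be a Lie-Rinehart algebra over R, U its enveloping algebra, N a left U-module, and M a U-bimodule with invariants M^S = {m : s·m = m·s ∀s∈S} viewed as a left U-module via α⋆m = α·m − m·α. Then the map Φ sending f ∈ Hom_U(N, M^S) to the map U ⊗_S N → M, u ⊗ n ↦ u·f(n) (using the left U-action on M), is a bijection onto Hom_{U-bimod}(U ⊗_S N, M), where U ⊗_S N is a U-bimodule with left action u'·(u⊗n) = u'u ⊗ n and right action (u⊗n)·s = us⊗n, (u⊗n)·α = uα⊗n − u⊗α·n. Its inverse sends g to the map n ↦ g(1⊗n). -/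
/-!
A left `U`-linear map `g` on `U ⊗[S] N` satisfies `g (u ⊗ n) = u • g (1 ⊗ n)`, so it is
determined by `n ↦ g (1 ⊗ n)`. Conversely, `u ⊗ n ↦ u • f n` is `S`-balanced because `f` is
`S`-linear, and it respects the right actions because `f` lands in `M^S` and turns `α • n` into
`α • f n - f n • α`.
-/

open MulOpposite TensorProduct

theorem TensorProduct.addMonoidHom_ext {R A B P : Type*} [CommSemiring R] [AddCommMonoid A]
    [AddCommMonoid B] [Module R A] [Module R B] [AddZeroClass P] {g h : A ⊗[R] B →+ P}
    (H : ∀ a b, g (a ⊗ₜ b) = h (a ⊗ₜ b)) : g = h := by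
  ext x
  induction x using TensorProduct.induction_on with
  | zero => simp only [map_zero]
  | tmul a b => exact H a b
  | add x y hx hy => rw [map_add, map_add, hx, hy]

section Adjunction

variable {S L U N M : Type*} [CommRing S] [Ring U] [Module S U]
  [AddCommGroup N] [Module U N] [Module S N] [AddCommGroup M] [Module U M]

/-- `f` is a map of left `U`-modules `N → M^S`, for the action `α ⋆ m = α·m − m·α` on `M^S`. -/
def IsHomToInvariants [Module Uᵐᵒᵖ M] (ιS : S → U) (ιL : L → U) (f : N →+ M) : Prop :=
  (∀ (s : S) (n : N), f (ιS s • n) = ιS s • f n) ∧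
  (∀ (α : L) (n : N), f (ιL α • n) = ιL α • f n - op (ιL α) • f n) ∧
  (∀ (n : N) (s : S), ιS s • f n = op (ιS s) • f n)

/-- `g` is a map of `U`-bimodules `U ⊗[S] N → M`, for the right action
`(u ⊗ n)·s = u s ⊗ n`, `(u ⊗ n)·α = u α ⊗ n − u ⊗ α·n` on `U ⊗[S] N`. -/
def IsBimoduleHom [Module Uᵐᵒᵖ M] (ιS : S → U) (ιL : L → U) (g : U ⊗[S] N →+ M) : Prop :=
  (∀ (u' u : U) (n : N), g ((u' * u) ⊗ₜ[S] n) = u' • g (u ⊗ₜ[S] n)) ∧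
  (∀ (u : U) (s : S) (n : N), g ((u * ιS s) ⊗ₜ[S] n) = op (ιS s) • g (u ⊗ₜ[S] n)) ∧
  (∀ (u : U) (α : L) (n : N),
    g ((u * ιL α) ⊗ₜ[S] n) - g (u ⊗ₜ[S] (ιL α • n)) = op (ιL α) • g (u ⊗ₜ[S] n))

def smulTensorLift {ιS : S → U} (hSU : ∀ (s : S) (u : U), s • u = u * ιS s)
    (hSN : ∀ (s : S) (n : N), s • n = ιS s • n) (f : N →+ M)
    (hf : ∀ (s : S) (n : N), f (ιS s • n) = ιS s • f n) : U ⊗[S] N →+ M :=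
  TensorProduct.liftAddHom ((AddMonoidHom.compHom' f).comp (smulAddHom U M)) fun s u n => by
    rw [hSU, hSN]
    change (u * ιS s) • f n = u • f (ιS s • n)
    rw [hf, mul_smul]

@[simp]
theorem smulTensorLift_tmul {ιS : S → U} (hSU : ∀ (s : S) (u : U), s • u = u * ιS s)
    (hSN : ∀ (s : S) (n : N), s • n = ιS s • n) (f : N →+ M)
    (hf : ∀ (s : S) (n : N), f (ιS s • n) = ιS s • f n) (u : U) (n : N) :
    smulTensorLift hSU hSN f hf (u ⊗ₜ n) = u • f n :=
  rfl

theorem isBimoduleHom_smulTensorLift [Module Uᵐᵒᵖ M] [SMulCommClass U Uᵐᵒᵖ M] {ιS : S → U}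
    {ιL : L → U} (hSU : ∀ (s : S) (u : U), s • u = u * ιS s)
    (hSN : ∀ (s : S) (n : N), s • n = ιS s • n) {f : N →+ M} (hf : IsHomToInvariants ιS ιL f) :
    IsBimoduleHom ιS ιL (smulTensorLift hSU hSN f hf.1) := by
  obtain ⟨-, hfL, hfS⟩ := hf
  refine ⟨fun u' u n => ?_, fun u s n => ?_, fun u α n => ?_⟩
  · simp only [smulTensorLift_tmul, mul_smul]
  · simp only [smulTensorLift_tmul, mul_smul, hfS, smul_comm u]
  · simp only [smulTensorLift_tmul, mul_smul, hfL, smul_sub, sub_sub_cancel, smul_comm u]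

namespace IsBimoduleHom

variable [Module Uᵐᵒᵖ M] {ιS : S → U} {ιL : L → U} {g : U ⊗[S] N →+ M}

theorem map_tmul (hg : IsBimoduleHom ιS ιL g) (u : U) (n : N) :
    g (u ⊗ₜ n) = u • g (1 ⊗ₜ n) := by
  rw [← hg.1, mul_one]

theorem isHomToInvariants_comp_mk_one (hSU : ∀ (s : S) (u : U), s • u = u * ιS s)
    (hSN : ∀ (s : S) (n : N), s • n = ιS s • n) (hg : IsBimoduleHom ιS ιL g) :
    IsHomToInvariants ιS ιL (g.comp (TensorProduct.mk S U N 1).toAddMonoidHom) := by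
  refine ⟨fun s n => ?_, fun α n => ?_, fun n s => ?_⟩
  all_goals simp only [AddMonoidHom.comp_apply, LinearMap.toAddMonoidHom_coe, mk_apply]
  · rw [← hSN, ← smul_tmul, hSU, one_mul, hg.map_tmul]
  · rw [← hg.map_tmul, eq_sub_iff_add_eq, ← hg.2.2, one_mul, add_sub_cancel]
  · rw [← hg.map_tmul, ← one_mul (ιS s), hg.2.1, one_mul]

end IsBimoduleHom

end Adjunction

theorem stmt14_general {R S L U N M : Type*} [CommRing R] [CommRing S] [Algebra R S]
    [LieRing L] [LieAlgebra R L]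
    [Ring U] [Algebra R U] [Module S U]
    [AddCommGroup N] [Module U N] [Module S N]
    [AddCommGroup M] [Module U M] [Module Uᵐᵒᵖ M] [SMulCommClass U Uᵐᵒᵖ M]
    (ιS : S →ₐ[R] U) (ιL : L →ₗ[R] U)
    (hSU : ∀ (s : S) (u : U), s • u = u * ιS s)
    (hSN : ∀ (s : S) (n : N), s • n = ιS s • n) :
    (∀ f : N →+ M,
      ((∀ (s : S) (n : N), f (ιS s • n) = ιS s • f n) ∧
       (∀ (α : L) (n : N), f (ιL α • n) = ιL α • f n - op (ιL α) • f n) ∧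
       (∀ (n : N) (s : S), ιS s • f n = op (ιS s) • f n)) →
      ∃! g : U ⊗[S] N →+ M,
        ((∀ (u' u : U) (n : N), g ((u' * u) ⊗ₜ[S] n) = u' • g (u ⊗ₜ[S] n)) ∧
         (∀ (u : U) (s : S) (n : N),
            g ((u * ιS s) ⊗ₜ[S] n) = op (ιS s) • g (u ⊗ₜ[S] n)) ∧
         (∀ (u : U) (α : L) (n : N),
            g ((u * ιL α) ⊗ₜ[S] n) - g (u ⊗ₜ[S] (ιL α • n))
              = op (ιL α) • g (u ⊗ₜ[S] n))) ∧
        (∀ (u : U) (n : N), g (u ⊗ₜ[S] n) = u • f n)) ∧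
    (∀ g : U ⊗[S] N →+ M,
      ((∀ (u' u : U) (n : N), g ((u' * u) ⊗ₜ[S] n) = u' • g (u ⊗ₜ[S] n)) ∧
       (∀ (u : U) (s : S) (n : N),
          g ((u * ιS s) ⊗ₜ[S] n) = op (ιS s) • g (u ⊗ₜ[S] n)) ∧
       (∀ (u : U) (α : L) (n : N),
          g ((u * ιL α) ⊗ₜ[S] n) - g (u ⊗ₜ[S] (ιL α • n))
            = op (ιL α) • g (u ⊗ₜ[S] n))) →
      ∃! f : N →+ M,
        ((∀ (s : S) (n : N), f (ιS s • n) = ιS s • f n) ∧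
         (∀ (α : L) (n : N), f (ιL α • n) = ιL α • f n - op (ιL α) • f n) ∧
         (∀ (n : N) (s : S), ιS s • f n = op (ιS s) • f n)) ∧
        (∀ n : N, f n = g ((1 : U) ⊗ₜ[S] n))) := by
  refine ⟨fun f hf => ?_, fun g hg => ?_⟩
  · refine ⟨smulTensorLift hSU hSN f hf.1,
      ⟨isBimoduleHom_smulTensorLift (ιL := ιL) hSU hSN hf, smulTensorLift_tmul hSU hSN f hf.1⟩,
      fun g ⟨_, hgf⟩ => TensorProduct.addMonoidHom_ext hgf⟩
  · exact ⟨_, ⟨IsBimoduleHom.isHomToInvariants_comp_mk_one hSU hSN hg, fun _ => rfl⟩,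
      fun f ⟨_, hfg⟩ => AddMonoidHom.ext hfg⟩

/-- Adjunction between `F = U ⊗_S −` and `G = (−)^S`.  Let `(S,L)` be a
Lie-Rinehart algebra over `R`, `U` its enveloping algebra (encoded by `ιS`, `ιL` and the
defining relations; the `S`-module structure of `U` is right multiplication,
`s • u = u·ιS s`), `N` a left `U`-module and `M` a `U`-bimodule.  The assignment
`f ↦ (u ⊗ n ↦ u·f(n))` is a bijection from the `U`-linear maps `N → M^S` onto the
`U`-bimodule maps `U ⊗_S N → M`, with inverse `g ↦ (n ↦ g(1 ⊗ n))`; here this bijection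
is expressed by the two unique-existence statements below. -/
theorem stmt14 {R S L U N M : Type*} [CommRing R] [CommRing S] [Algebra R S]
    [LieRing L] [LieAlgebra R L] [Module S L]
    [Ring U] [Algebra R U] [Module S U]
    [AddCommGroup N] [Module U N] [Module S N]
    [AddCommGroup M] [Module U M] [Module Uᵐᵒᵖ M] [SMulCommClass U Uᵐᵒᵖ M]
    (D : L → Derivation R S S)
    (ιS : S →ₐ[R] U) (ιL : L →ₗ[R] U)
    (hrel1 : ∀ α β : L, ιL ⁅α, β⁆ = ιL α * ιL β - ιL β * ιL α)
    (hrel2 : ∀ (s : S) (α : L), ιL (s • α) = ιS s * ιL α)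
    (hrel3 : ∀ (α : L) (s : S), ιL α * ιS s - ιS s * ιL α = ιS (D α s))
    (hSU : ∀ (s : S) (u : U), s • u = u * ιS s)
    (hSN : ∀ (s : S) (n : N), s • n = ιS s • n) :
    (∀ f : N →+ M,
      ((∀ (s : S) (n : N), f (ιS s • n) = ιS s • f n) ∧
       (∀ (α : L) (n : N), f (ιL α • n) = ιL α • f n - op (ιL α) • f n) ∧
       (∀ (n : N) (s : S), ιS s • f n = op (ιS s) • f n)) →
      ∃! g : U ⊗[S] N →+ M,
        ((∀ (u' u : U) (n : N), g ((u' * u) ⊗ₜ[S] n) = u' • g (u ⊗ₜ[S] n)) ∧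
         (∀ (u : U) (s : S) (n : N),
            g ((u * ιS s) ⊗ₜ[S] n) = op (ιS s) • g (u ⊗ₜ[S] n)) ∧
         (∀ (u : U) (α : L) (n : N),
            g ((u * ιL α) ⊗ₜ[S] n) - g (u ⊗ₜ[S] (ιL α • n))
              = op (ιL α) • g (u ⊗ₜ[S] n))) ∧
        (∀ (u : U) (n : N), g (u ⊗ₜ[S] n) = u • f n)) ∧
    (∀ g : U ⊗[S] N →+ M,
      ((∀ (u' u : U) (n : N), g ((u' * u) ⊗ₜ[S] n) = u' • g (u ⊗ₜ[S] n)) ∧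
       (∀ (u : U) (s : S) (n : N),
          g ((u * ιS s) ⊗ₜ[S] n) = op (ιS s) • g (u ⊗ₜ[S] n)) ∧
       (∀ (u : U) (α : L) (n : N),
          g ((u * ιL α) ⊗ₜ[S] n) - g (u ⊗ₜ[S] (ιL α • n))
            = op (ιL α) • g (u ⊗ₜ[S] n))) →
      ∃! f : N →+ M,
        ((∀ (s : S) (n : N), f (ιS s • n) = ιS s • f n) ∧
         (∀ (α : L) (n : N), f (ιL α • n) = ιL α • f n - op (ιL α) • f n) ∧
         (∀ (n : N) (s : S), ιS s • f n = op (ιS s) • f n)) ∧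
        (∀ n : N, f n = g ((1 : U) ⊗ₜ[S] n))) :=
  stmt14_general ιS ιL hSU hSN
end

section
/- Let (S,L) be a Lie-Rinehart algebra over R with L free of finite rank d as an S-module with basis (α_1,…,α_d), and let φ_L = α_1* ∧ ⋯ ∧ α_d* be the corresponding generator of Λ^d_S L^∨. Then the right U-action on Λ^d_S L^∨ given by φ·α = −λ_α(φ) (with λ_α the Lie derivative) satisfies φ_L·α = Tr(ad_α)·φ_L for every α ∈ L, where ad_α : L → L, β ↦ [α,β], is S-linear up to the anchor term and Tr(ad_α) denotes the trace of the matrix (s^α_{jk}) defined by [α, α_k] = Σ_j s^α_{jk} α_j. -/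
/-!
The Lie derivative `λ_α` maps alternating `d`-forms on `L` to alternating `d`-forms: the defect
`∂_α(s) β` in `[α, s β] = s [α, β] + ∂_α(s) β` is cancelled by the Leibniz rule for `∂_α`.
Since `L` is free of rank `d`, alternating `d`-forms are multiples of `φ_L = b.det`, so
`λ_α φ_L = (λ_α φ_L)(α_1, …, α_d) φ_L`, and the coefficient is
`∂_α(1) - ∑_i φ_L(α_1, …, [α, α_i], …, α_d) = -Tr(ad_α)`.
-/

open Finset Function

theorem Fintype.sum_update_update_eq_add_sum_erase {ι M N : Type*} [Fintype ι] [DecidableEq ι]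
    [AddCommMonoid N] (F : (ι → M) → N) (g : M → M) (m : ι → M) (i : ι) (v : M) :
    ∑ j, F (update (update m i v) j (g (update m i v j)))
      = F (update m i (g v)) + ∑ j ∈ univ.erase i, F (update (update m j (g (m j))) i v) := by
  rw [← add_sum_erase _ _ (mem_univ i), update_self, update_idem]
  congr 1
  refine Finset.sum_congr rfl fun j hj => ?_
  rw [update_of_ne (ne_of_mem_erase hj), update_comm (ne_of_mem_erase hj).symm]

theorem Module.Basis.det_update_self {ι S M : Type*} [Fintype ι] [DecidableEq ι] [CommRing S]
    [AddCommGroup M] [Module S M] (b : Module.Basis ι S M) (i : ι) (x : M) :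
    b.det (update b i x) = b.repr x i := by
  rw [b.det_apply, b.toMatrix_update, b.toMatrix_self, ← Matrix.cramer_apply, Matrix.cramer_one]
  rfl

namespace AlternatingMap

theorem map_update_add_map_update_eq_zero {R M N ι : Type*} [Semiring R] [AddCommMonoid M]
    [Module R M] [AddCommMonoid N] [Module R N] [DecidableEq ι] (f : M [⋀^ι]→ₗ[R] N) (g : M → M)
    {v : ι → M} {i j : ι} (hv : v i = v j) (hij : i ≠ j) :
    f (update v i (g (v i))) + f (update v j (g (v j))) = 0 := by
  have hswap : update v j (g (v j)) ∘ Equiv.swap i j = update v i (g (v i)) := by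
    rw [update_comp_equiv, Equiv.symm_swap, Equiv.swap_apply_right, Equiv.comp_swap_eq_update,
      hv, update_eq_self, update_idem]
  rw [← hswap]
  exact f.map_swap_add _ hij

variable {R S L ι : Type*} [CommRing R] [CommRing S] [Algebra R S] [LieRing L] [Module S L]
  [Fintype ι] [decEq : DecidableEq ι] (D : L → Derivation R S S) (α : L)
  (hα : ∀ (s : S) (β : L), ⁅α, s • β⁆ = s • ⁅α, β⁆ + D α s • β)

def lieDeriv (f : L [⋀^ι]→ₗ[S] S) : L [⋀^ι]→ₗ[S] S where
  toFun β := D α (f β) - ∑ i, f (update β i ⁅α, β i⁆)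
  map_update_add' := by
    intro inst m i x y
    obtain rfl := Subsingleton.elim inst decEq
    simp only [Fintype.sum_update_update_eq_add_sum_erase, lie_add, map_update_add, map_add,
      sum_add_distrib]
    abel
  map_update_smul' := by
    intro inst m i s x
    obtain rfl := Subsingleton.elim inst decEq
    simp only [Fintype.sum_update_update_eq_add_sum_erase, hα, map_update_add, map_update_smul,
      smul_eq_mul, Derivation.leibniz, ← mul_sum]
    ring
  map_eq_zero_of_eq' β i j hβ hij := by
    rw [f.map_eq_zero_of_eq β hβ hij, (D α).map_zero, zero_sub, neg_eq_zero,
      Fintype.sum_eq_add i j hij fun k hk =>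
        f.map_eq_zero_of_eq _ (by rw [update_of_ne hk.1.symm, update_of_ne hk.2.symm, hβ]) hij]
    exact f.map_update_add_map_update_eq_zero (⁅α, ·⁆) hβ hij

theorem lieDeriv_apply (f : L [⋀^ι]→ₗ[S] S) (β : ι → L) :
    lieDeriv D α hα f β = D α (f β) - ∑ i, f (update β i ⁅α, β i⁆) :=
  rfl

theorem lieDeriv_basis_det (b : Module.Basis ι S L) :
    lieDeriv D α hα b.det = -(∑ i, b.repr ⁅α, b i⁆ i) • b.det := by
  rw [(lieDeriv D α hα b.det).eq_smul_basis_det b, lieDeriv_apply, b.det_self,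
    (D α).map_one_eq_zero, zero_sub]
  simp only [b.det_update_self]

end AlternatingMap

theorem stmt16_general {R S L : Type*} [CommRing R] [CommRing S] [Algebra R S]
    [LieRing L] [Module S L]
    (D : L → Derivation R S S)
    (hLeib : ∀ (s : S) (α β : L), ⁅α, s • β⁆ = s • ⁅α, β⁆ + (D α s) • β)
    {d : ℕ} (b : Module.Basis (Fin d) S L) :
    ∀ (α : L) (β : Fin d → L),
      -(D α (b.det β) - ∑ i : Fin d, b.det (Function.update β i ⁅α, β i⁆))
        = (∑ j : Fin d, b.repr ⁅α, b j⁆ j) * b.det β := by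
  intro α β
  have h := congr($(AlternatingMap.lieDeriv_basis_det D α (hLeib · α ·) b) β)
  rw [AlternatingMap.lieDeriv_apply] at h
  rw [h, AlternatingMap.smul_apply, smul_eq_mul, neg_mul, neg_neg]

/-- Let `(S,L)` be a Lie-Rinehart algebra over `R` with `L` free of finite
rank `d` over `S` with basis `b = (α_1,…,α_d)`, and let `φ_L = α_1* ∧ ⋯ ∧ α_d*` be the
corresponding generator of `Λ^d_S L^∨`, realised as the determinant form `b.det`.  Then
the right `U`-action `φ·α = −λ_α(φ)` on `Λ^d_S L^∨`, where
`(λ_α φ)(β_1,…,β_d) = ∂_α(φ(β)) − Σ_i φ(β_1,…,⁅α,β_i⁆,…,β_d)`, satisfies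
`φ_L·α = Tr(ad_α)·φ_L`, with `Tr(ad_α) = Σ_j s_{jj}` for `⁅α,α_k⁆ = Σ_j s_{jk} α_j`. -/
theorem stmt16 {R S L : Type*} [CommRing R] [CommRing S] [Algebra R S]
    [LieRing L] [LieAlgebra R L] [Module S L]
    (D : L → Derivation R S S)
    (hDsmul : ∀ (s : S) (α : L), D (s • α) = s • D α)
    (hLeib : ∀ (s : S) (α β : L), ⁅α, s • β⁆ = s • ⁅α, β⁆ + (D α s) • β)
    {d : ℕ} (b : Module.Basis (Fin d) S L) :
    ∀ (α : L) (β : Fin d → L),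
      -(D α (b.det β) - ∑ i : Fin d, b.det (Function.update β i ⁅α, β i⁆))
        = (∑ j : Fin d, b.repr ⁅α, b j⁆ j) * b.det β :=
  stmt16_general D hLeib b
end

section
/- Let R be a commutative ring with 2 invertible (or more generally a domain with char ≠ 2), S = R[x,y], P ∈ S, and U the enveloping algebra of the Lie-Rinehart algebra (S, Ω_{S/R}) associated to the Poisson bracket {x,y} = P. The Nakayama automorphism ν of U given by ν(s)=s, ν(dx) = dx + 2 ∂P/∂y, ν(dy) = dy − 2 ∂P/∂x is the identity if and only if P ∈ R (i.e., ∂P/∂x = ∂P/∂y = 0 when R contains ℚ). -/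
open MvPolynomial

/- The coefficient of `m` in `∂p/∂xᵢ` is `(mᵢ + 1)` times a coefficient of `p`, and every
monomial other than `1` arises this way; torsion-freeness cancels the factor `mᵢ + 1`. -/
theorem MvPolynomial.eq_C_of_forall_pderiv_eq_zero {σ R : Type*} [CommSemiring R]
    [IsAddTorsionFree R] {p : MvPolynomial σ R} (h : ∀ i, pderiv i p = 0) :
    p = C (coeff 0 p) := by
  classical
  ext m
  obtain rfl | hm := eq_or_ne m 0
  · rw [coeff_C, if_pos rfl]
  rw [coeff_C, if_neg hm.symm]
  obtain ⟨i, hi⟩ : ∃ i, m i ≠ 0 := by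
    by_contra! h'
    exact hm (Finsupp.ext h')
  have hcoeff := coeff_pderiv (i := i) p (m - Finsupp.single i 1)
  rw [h i, coeff_zero, tsub_add_cancel_of_le
    (Finsupp.single_le_iff.2 (Nat.one_le_iff_ne_zero.2 hi))] at hcoeff
  rw [← Nat.cast_succ, mul_comm, ← nsmul_eq_mul, eq_comm, smul_eq_zero] at hcoeff
  simpa using hcoeff

/-- Let `R` be a domain of characteristic zero (in particular `2` is
invertible and `R ⊇ ℚ`-type conclusions hold), `S = R[x,y]`, `P ∈ S`, and `U` the
enveloping algebra of the Lie-Rinehart algebra `(S, Ω_{S/R})` of the Poisson bracket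
`{x,y} = P` (encoded by an injective `ιS : S →ₐ[R] U`, the classes `dx, dy` of the
differentials, and the generation hypothesis).  The Nakayama automorphism `ν` with
`ν(s) = s`, `ν(dx) = dx + 2∂P/∂y`, `ν(dy) = dy − 2∂P/∂x` is the identity if and only if
`P ∈ R` is a constant. -/
theorem stmt17 {R U : Type*} [CommRing R] [IsDomain R] [CharZero R]
    [Ring U] [Algebra R U]
    (P : MvPolynomial (Fin 2) R)
    (ιS : MvPolynomial (Fin 2) R →ₐ[R] U) (hinj : Function.Injective ιS)
    (dx dy : U)
    (hgen : ∀ u : U, u ∈ Algebra.adjoin R (Set.range ιS ∪ {dx, dy}))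
    (ν : U →ₐ[R] U)
    (hνS : ∀ f : MvPolynomial (Fin 2) R, ν (ιS f) = ιS f)
    (hνx : ν dx = dx + ιS (2 * pderiv 1 P))
    (hνy : ν dy = dy - ιS (2 * pderiv 0 P)) :
    ν = AlgHom.id R U ↔ ∃ c : R, P = C c := by
  constructor
  · rintro rfl
    have hPy : 2 * pderiv 1 P = 0 := (map_eq_zero_iff ιS hinj).1 (left_eq_add.1 hνx)
    have hPx : 2 * pderiv 0 P = 0 := (map_eq_zero_iff ιS hinj).1 (sub_eq_self.1 hνy.symm)
    rw [mul_eq_zero, or_iff_right two_ne_zero] at hPx hPy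
    exact ⟨_, eq_C_of_forall_pderiv_eq_zero (Fin.forall_fin_two.2 ⟨hPx, hPy⟩)⟩
  · rintro ⟨c, rfl⟩
    refine AlgHom.ext_of_adjoin_eq_top (eq_top_iff.2 fun u _ => hgen u) ?_
    rintro _ (⟨f, rfl⟩ | rfl | rfl) <;> simp_all
end
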